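/- arXiv:0912.0285 — 5 statements merged into one kernel-verified Lean document; each statement's English description precedes it below -/
import Mathlib

section
/- Let N ≥ 1, γ > 0 and β₁, …, β_N > 0 with γ > ∑_{j=1}^N 1/β_j. Then the integral over {λ ∈ R^N : |λ| > 1} of (∑_{j=1}^N |λ_j|^{β_j})^{-γ} dλ is finite. -/
/-!
Since `∑ 1/β_j < γ`, one can write `γ = ∑ q_j` with every `β_j q_j > 1`. Away from the
origin `s(λ) = ∑ |λ_j|^{β_j}` is bounded below, so `s ≳ (1 + |λ_j|)^{β_j}` for each `j`,
and hence `s^{-γ} = ∏ s^{-q_j} ≲ ∏ (1 + |λ_j|)^{-β_j q_j}`, a product of integrable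
functions of one variable each.
-/

open MeasureTheory Finset

lemma exists_sum_eq_and_one_lt_mul {ι : Type*} [Fintype ι] [Nonempty ι] {β : ι → ℝ}
    {γ : ℝ} (hβ : ∀ j, 0 < β j) (h : ∑ j, 1 / β j < γ) :
    ∃ q : ι → ℝ, (∀ j, 0 < q j) ∧ ∑ j, q j = γ ∧ ∀ j, 1 < β j * q j := by
  have hS : 0 < ∑ j, 1 / β j :=
    sum_pos (fun j _ => one_div_pos.mpr (hβ j)) univ_nonempty
  have ht : 1 < γ / ∑ j, 1 / β j := (one_lt_div hS).mpr h
  refine ⟨fun j => γ / (∑ i, 1 / β i) * (1 / β j),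
    fun j => mul_pos (by linarith) (one_div_pos.mpr (hβ j)), ?_, fun j => ?_⟩
  · rw [← mul_sum, div_mul_cancel₀ _ hS.ne']
  · rwa [mul_left_comm, mul_one_div_cancel (hβ j).ne', mul_one]

lemma EuclideanSpace.exists_norm_le_sqrt_card_mul_abs {ι : Type*} [Fintype ι] [Nonempty ι]
    (x : EuclideanSpace ℝ ι) : ∃ j, ‖x‖ ≤ √(Fintype.card ι) * |x j| := by
  obtain ⟨j, hj⟩ := Finite.exists_max fun i => |x i|
  refine ⟨j, ?_⟩
  calc ‖x‖ = √(∑ i, |x i| ^ 2) := by simp only [EuclideanSpace.norm_eq, Real.norm_eq_abs]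
    _ ≤ √(∑ _i : ι, |x j| ^ 2) :=
      Real.sqrt_le_sqrt (sum_le_sum fun i _ => pow_le_pow_left₀ (abs_nonneg _) (hj i) 2)
    _ = √(Fintype.card ι) * |x j| := by
      rw [sum_const, card_univ, nsmul_eq_mul, Real.sqrt_mul (Nat.cast_nonneg _),
        Real.sqrt_sq (abs_nonneg _)]

lemma EuclideanSpace.exists_pos_le_sum_abs_rpow {ι : Type*} [Fintype ι] [Nonempty ι]
    {β : ι → ℝ} (hβ : ∀ j, 0 ≤ β j) :
    ∃ δ > 0, ∀ x : EuclideanSpace ℝ ι, 1 ≤ ‖x‖ → δ ≤ ∑ j, |x j| ^ β j := by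
  set m := (√(Fintype.card ι))⁻¹
  have hcard : (1 : ℝ) ≤ Fintype.card ι := Nat.one_le_cast.mpr Fintype.card_pos
  have hsqrt : 0 < √(Fintype.card ι) := Real.sqrt_pos.mpr (by linarith)
  have hm0 : 0 < m := inv_pos.mpr hsqrt
  have hm1 : m ≤ 1 := inv_le_one_of_one_le₀ (Real.one_le_sqrt.mpr hcard)
  refine ⟨m ^ ∑ j, β j, Real.rpow_pos_of_pos hm0 _, fun x hx => ?_⟩
  obtain ⟨j, hj⟩ := exists_norm_le_sqrt_card_mul_abs x
  have hmj : m ≤ |x j| := by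
    rw [inv_le_iff_one_le_mul₀ hsqrt]
    linarith
  calc m ^ ∑ j, β j ≤ m ^ β j :=
        Real.rpow_le_rpow_of_exponent_ge hm0 hm1
          (single_le_sum (fun i _ => hβ i) (mem_univ j))
    _ ≤ |x j| ^ β j := Real.rpow_le_rpow hm0.le hmj (hβ j)
    _ ≤ ∑ j, |x j| ^ β j :=
        single_le_sum (fun i _ => Real.rpow_nonneg (abs_nonneg _) _) (mem_univ j)

lemma Real.one_add_rpow_le_two_rpow_mul {x β : ℝ} (hx : 0 ≤ x) (hβ : 0 ≤ β) :
    (1 + x) ^ β ≤ 2 ^ β * (1 + x ^ β) := by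
  have h2 : 0 < (2 : ℝ) ^ β := Real.rpow_pos_of_pos two_pos β
  have hxβ : 0 ≤ x ^ β := Real.rpow_nonneg hx β
  rcases le_total x 1 with hx1 | hx1
  · calc (1 + x) ^ β ≤ 2 ^ β := Real.rpow_le_rpow (by linarith) (by linarith) hβ
      _ ≤ 2 ^ β * (1 + x ^ β) := le_mul_of_one_le_right h2.le (by linarith)
  · calc (1 + x) ^ β ≤ (2 * x) ^ β := Real.rpow_le_rpow (by linarith) (by linarith) hβ
      _ = 2 ^ β * x ^ β := Real.mul_rpow zero_le_two hx
      _ ≤ 2 ^ β * (1 + x ^ β) := by gcongr; linarith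

section Domination

variable {ι : Type*} [Fintype ι] {β q : ι → ℝ} {δ : ℝ} {x : ι → ℝ}

lemma one_add_abs_rpow_le_mul_sum_abs_rpow (hβ : ∀ j, 0 ≤ β j) (hδ : 0 < δ)
    (hx : δ ≤ ∑ j, |x j| ^ β j) (j : ι) :
    (1 + |x j|) ^ β j ≤ 2 ^ β j * (1 + δ⁻¹) * ∑ j, |x j| ^ β j := by
  set s := ∑ j, |x j| ^ β j
  have hxj : |x j| ^ β j ≤ s :=
    single_le_sum (fun i _ => Real.rpow_nonneg (abs_nonneg _) _) (mem_univ j)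
  have hone : 1 ≤ δ⁻¹ * s := by rwa [le_inv_mul_iff₀ hδ, mul_one]
  calc (1 + |x j|) ^ β j ≤ 2 ^ β j * (1 + |x j| ^ β j) :=
        Real.one_add_rpow_le_two_rpow_mul (abs_nonneg _) (hβ j)
    _ ≤ 2 ^ β j * (δ⁻¹ * s + s) := by gcongr
    _ = 2 ^ β j * (1 + δ⁻¹) * s := by ring

lemma prod_one_add_abs_rpow_mul_le (hβ : ∀ j, 0 ≤ β j) (hq : ∀ j, 0 ≤ q j) (hδ : 0 < δ)
    (hx : δ ≤ ∑ j, |x j| ^ β j) :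
    ∏ j, (1 + |x j|) ^ (β j * q j) ≤
      (∏ j, (2 ^ β j * (1 + δ⁻¹)) ^ q j) * (∑ j, |x j| ^ β j) ^ ∑ j, q j := by
  set s := ∑ j, |x j| ^ β j
  have hs : 0 < s := hδ.trans_le hx
  rw [Real.rpow_sum_of_pos hs, ← prod_mul_distrib]
  refine prod_le_prod (fun j _ => by positivity) fun j _ => ?_
  rw [Real.rpow_mul (by positivity), ← Real.mul_rpow (by positivity) hs.le]
  exact Real.rpow_le_rpow (by positivity)
    (one_add_abs_rpow_le_mul_sum_abs_rpow hβ hδ hx j) (hq j)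

lemma sum_abs_rpow_rpow_neg_le (hβ : ∀ j, 0 ≤ β j) (hq : ∀ j, 0 ≤ q j) (hδ : 0 < δ)
    (hx : δ ≤ ∑ j, |x j| ^ β j) :
    (∑ j, |x j| ^ β j) ^ (-∑ j, q j) ≤
      (∏ j, (2 ^ β j * (1 + δ⁻¹)) ^ q j) * ∏ j, (1 + |x j|) ^ (-(β j * q j)) := by
  have hs : 0 < ∑ j, |x j| ^ β j := hδ.trans_le hx
  have hP : 0 < ∏ j, (1 + |x j|) ^ (β j * q j) := prod_pos fun j _ => by positivity
  have hinv :
      ∏ j, (1 + |x j|) ^ (-(β j * q j)) = (∏ j, (1 + |x j|) ^ (β j * q j))⁻¹ := by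
    rw [← prod_inv_distrib]
    exact prod_congr rfl fun j _ => Real.rpow_neg (by positivity) _
  rw [Real.rpow_neg hs.le, hinv, ← div_eq_mul_inv, le_div_iff₀ hP,
    inv_mul_le_iff₀' (by positivity)]
  exact prod_one_add_abs_rpow_mul_le hβ hq hδ hx

end Domination

lemma EuclideanSpace.integrable_prod_one_add_abs_rpow_neg {ι : Type*} [Fintype ι]
    {r : ι → ℝ} (hr : ∀ j, 1 < r j) :
    Integrable fun x : EuclideanSpace ℝ ι => ∏ j, (1 + |x j|) ^ (-r j) := by
  have hcoord : ∀ j, Integrable fun t : ℝ => (1 + |t|) ^ (-r j) := fun j => by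
    simpa [Real.norm_eq_abs] using integrable_one_add_norm (E := ℝ) (by simpa using hr j)
  exact ((EuclideanSpace.volume_preserving_symm_measurableEquiv_toLp ι).integrable_comp_emb
      (MeasurableEquiv.measurableEmbedding _)).2
    (Integrable.fintype_prod hcoord)

theorem stmt3_general (N : ℕ) (hN : 1 ≤ N) (γ : ℝ) (β : Fin N → ℝ)
    (hβ : ∀ j, 0 < β j) (h : ∑ j, 1 / β j < γ) :
    ∫⁻ l in {l : EuclideanSpace ℝ (Fin N) | 1 < ‖l‖},
      ENNReal.ofReal ((∑ j, |l j| ^ β j) ^ (-γ)) < ⊤ := by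
  have : Nonempty (Fin N) := Fin.pos_iff_nonempty.mp hN
  obtain ⟨q, hq, rfl, hβq⟩ := exists_sum_eq_and_one_lt_mul hβ h
  obtain ⟨δ, hδ, hsum⟩ := EuclideanSpace.exists_pos_le_sum_abs_rpow fun j => (hβ j).le
  set K := ∏ j, (2 ^ β j * (1 + δ⁻¹)) ^ q j
  have hint := (EuclideanSpace.integrable_prod_one_add_abs_rpow_neg hβq).const_mul K
  have hbound : ∀ l : EuclideanSpace ℝ (Fin N), 1 < ‖l‖ →
      (∑ j, |l j| ^ β j) ^ (-∑ j, q j) ≤ K * ∏ j, (1 + |l j|) ^ (-(β j * q j)) :=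
    fun l hl =>
      sum_abs_rpow_rpow_neg_le (fun j => (hβ j).le) (fun j => (hq j).le) hδ (hsum l hl.le)
  calc ∫⁻ l in {l : EuclideanSpace ℝ (Fin N) | 1 < ‖l‖},
        ENNReal.ofReal ((∑ j, |l j| ^ β j) ^ (-∑ j, q j))
      ≤ ∫⁻ l in {l : EuclideanSpace ℝ (Fin N) | 1 < ‖l‖},
        ENNReal.ofReal (K * ∏ j, (1 + |l j|) ^ (-(β j * q j))) :=
        setLIntegral_mono' (measurableSet_lt measurable_const measurable_norm) fun l hl =>
          ENNReal.ofReal_le_ofReal (hbound l hl)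
    _ ≤ ∫⁻ l : EuclideanSpace ℝ (Fin N),
        ENNReal.ofReal (K * ∏ j, (1 + |l j|) ^ (-(β j * q j))) :=
        setLIntegral_le_lintegral _ _
    _ < ⊤ := hint.lintegral_lt_top

theorem stmt3 (N : ℕ) (hN : 1 ≤ N) (γ : ℝ) (hγ : 0 < γ) (β : Fin N → ℝ)
    (hβ : ∀ j, 0 < β j) (h : ∑ j, 1 / β j < γ) :
    ∫⁻ l in {l : EuclideanSpace ℝ (Fin N) | 1 < ‖l‖},
      ENNReal.ofReal ((∑ j, |l j| ^ β j) ^ (-γ)) < ⊤ :=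
  stmt3_general N hN γ β hβ h
end

section
/- Let N ≥ 1, γ > 0 and β₁, …, β_N > 0 with γ ≤ ∑_{j=1}^N 1/β_j. Then the integral over {λ ∈ R^N : |λ| > 1} of (∑_{j=1}^N |λ_j|^{β_j})^{-γ} dλ is infinite. -/
open MeasureTheory

/-!
Write `s = ∑ j, 1 / β j`. Cut the positive orthant into the anisotropic dyadic boxes
`∏ j, [2 ^ (m / β j), 2 ^ ((m + 1) / β j))`. On the `m`-th box `∑ j, |x j| ^ β j ≤ 2N · 2 ^ m`
while its volume is `2 ^ (m s)` times a constant, so the integral over it is at least a constant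
times `2 ^ (m (s - γ)) ≥ 1`. Summing over the infinitely many disjoint boxes outside the unit ball
gives `⊤`.
-/

open Set Finset
open scoped Function ENNReal

lemma setLIntegral_iUnion_eq_top {α : Type*} [MeasurableSpace α] {μ : Measure α}
    {s : ℕ → Set α} (hs : ∀ m, MeasurableSet (s m)) (hd : Pairwise (Disjoint on s))
    {f : α → ℝ≥0∞} {c : ℝ≥0∞} (hc : c ≠ 0) (hf : ∀ m, c ≤ ∫⁻ x in s m, f x ∂μ) :
    ∫⁻ x in ⋃ m, s m, f x ∂μ = ⊤ := by
  rw [lintegral_iUnion hs hd, ← top_le_iff, ← ENNReal.tsum_const_eq_top_of_ne_zero (α := ℕ) hc]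
  exact ENNReal.tsum_le_tsum hf

noncomputable section

variable {ι : Type*}

def dyadicCorner (β : ι → ℝ) (m : ℕ) (j : ι) : ℝ := (2 : ℝ) ^ ((m : ℝ) / β j)

def dyadicBox (β : ι → ℝ) (m : ℕ) : Set (ι → ℝ) :=
  univ.pi fun j => Ico (dyadicCorner β m j) (dyadicCorner β (m + 1) j)

variable {β : ι → ℝ}

lemma dyadicCorner_succ (β : ι → ℝ) (m : ℕ) (j : ι) :
    dyadicCorner β (m + 1) j = dyadicCorner β m j * 2 ^ (1 / β j) := by
  rw [dyadicCorner, dyadicCorner, ← Real.rpow_add two_pos]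
  push_cast
  ring_nf

lemma one_le_dyadicCorner (hβ : ∀ j, 0 < β j) (m : ℕ) (j : ι) : 1 ≤ dyadicCorner β m j :=
  Real.one_le_rpow one_le_two (div_nonneg m.cast_nonneg (hβ j).le)

lemma one_lt_dyadicCorner (hβ : ∀ j, 0 < β j) {m : ℕ} (hm : 0 < m) (j : ι) :
    1 < dyadicCorner β m j :=
  Real.one_lt_rpow one_lt_two (div_pos (Nat.cast_pos.2 hm) (hβ j))

lemma monotone_dyadicCorner (hβ : ∀ j, 0 < β j) (j : ι) :
    Monotone fun m => dyadicCorner β m j := fun _ _ hab =>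
  Real.rpow_le_rpow_of_exponent_le one_le_two
    (div_le_div_of_nonneg_right (Nat.cast_le.2 hab) (hβ j).le)

lemma dyadicCorner_rpow (hβ : ∀ j, 0 < β j) (m : ℕ) (j : ι) :
    dyadicCorner β m j ^ β j = 2 ^ m := by
  rw [dyadicCorner, ← Real.rpow_mul zero_le_two, div_mul_cancel₀ _ (hβ j).ne',
    Real.rpow_natCast]

lemma one_le_of_mem_dyadicBox (hβ : ∀ j, 0 < β j) {m : ℕ} {x : ι → ℝ}
    (hx : x ∈ dyadicBox β m) (j : ι) : 1 ≤ x j :=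
  (one_le_dyadicCorner hβ m j).trans (hx j (mem_univ j)).1

lemma pairwise_disjoint_dyadicBox [Nonempty ι] (hβ : ∀ j, 0 < β j) :
    Pairwise (Disjoint on dyadicBox β) := fun a b hab => by
  obtain ⟨j⟩ := ‹Nonempty ι›
  refine Disjoint.mono ?_ ?_ <|
    ((monotone_dyadicCorner hβ j).pairwise_disjoint_on_Ico_succ hab).preimage (Function.eval j)
  all_goals exact fun x hx => hx j (mem_univ j)

variable [Fintype ι]

lemma measurableSet_dyadicBox (β : ι → ℝ) (m : ℕ) : MeasurableSet (dyadicBox β m) :=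
  MeasurableSet.univ_pi fun _ => measurableSet_Ico

lemma prod_two_rpow_one_div_sub_one_pos (hβ : ∀ j, 0 < β j) :
    0 < ∏ j, ((2 : ℝ) ^ (1 / β j) - 1) :=
  Finset.prod_pos fun j _ => sub_pos.2 (Real.one_lt_rpow one_lt_two (div_pos one_pos (hβ j)))

lemma volume_dyadicBox (hβ : ∀ j, 0 < β j) (m : ℕ) :
    volume (dyadicBox β m) =
      ENNReal.ofReal ((2 : ℝ) ^ ((m : ℝ) * ∑ j, 1 / β j) * ∏ j, ((2 : ℝ) ^ (1 / β j) - 1)) := by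
  have hside : ∀ j, dyadicCorner β (m + 1) j - dyadicCorner β m j =
      2 ^ ((m : ℝ) * (1 / β j)) * (2 ^ (1 / β j) - 1) := by
    intro j
    rw [dyadicCorner_succ, dyadicCorner, mul_one_div]
    ring
  rw [dyadicBox, volume_pi_pi, Finset.mul_sum, Real.rpow_sum_of_pos two_pos,
    ← Finset.prod_mul_distrib, ENNReal.ofReal_prod_of_nonneg fun j _ => by
      rw [← hside]; exact sub_nonneg.2 (monotone_dyadicCorner hβ j m.le_succ)]
  exact Finset.prod_congr rfl fun j _ => by rw [Real.volume_Ico, hside]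

lemma sum_rpow_le_of_mem_dyadicBox (hβ : ∀ j, 0 < β j) {m : ℕ} {x : ι → ℝ}
    (hx : x ∈ dyadicBox β m) : ∑ j, |x j| ^ β j ≤ Fintype.card ι * 2 ^ (m + 1) := by
  calc ∑ j, |x j| ^ β j ≤ ∑ j, dyadicCorner β (m + 1) j ^ β j := by
        gcongr with j
        · exact (hβ j).le
        · rw [abs_of_nonneg (zero_le_one.trans (one_le_of_mem_dyadicBox hβ hx j))]
          exact (hx j (mem_univ j)).2.le
    _ = Fintype.card ι * 2 ^ (m + 1) := by
        simp [dyadicCorner_rpow hβ]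

variable [Nonempty ι]

lemma le_setLIntegral_dyadicBox (hβ : ∀ j, 0 < β j) {γ : ℝ} (hγ : 0 ≤ γ)
    (h : γ ≤ ∑ j, 1 / β j) (m : ℕ) :
    ENNReal.ofReal ((2 * Fintype.card ι) ^ (-γ) * ∏ j, ((2 : ℝ) ^ (1 / β j) - 1)) ≤
      ∫⁻ x in dyadicBox β m, ENNReal.ofReal ((∑ j, |x j| ^ β j) ^ (-γ)) := by
  set n : ℝ := (Fintype.card ι : ℝ)
  set P := ∏ j, ((2 : ℝ) ^ (1 / β j) - 1)
  have hn : 0 < n := Nat.cast_pos.2 Fintype.card_pos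
  have hP : 0 ≤ P := (prod_two_rpow_one_div_sub_one_pos hβ).le
  have hbound : ∀ x ∈ dyadicBox β m,
      ENNReal.ofReal ((n * 2 ^ (m + 1)) ^ (-γ)) ≤ ENNReal.ofReal ((∑ j, |x j| ^ β j) ^ (-γ)) := by
    intro x hx
    refine ENNReal.ofReal_le_ofReal (Real.rpow_le_rpow_of_nonpos ?_
      (sum_rpow_le_of_mem_dyadicBox hβ hx) (neg_nonpos.2 hγ))
    exact Finset.sum_pos (fun j _ => Real.rpow_pos_of_pos
      (zero_lt_one.trans_le ((one_le_of_mem_dyadicBox hβ hx j).trans (le_abs_self _))) _)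
      univ_nonempty
  have hsplit : (n * 2 ^ (m + 1)) ^ (-γ) = (2 * n) ^ (-γ) * (2 : ℝ) ^ (-((m : ℝ) * γ)) := by
    rw [show n * 2 ^ (m + 1) = 2 * n * (2 : ℝ) ^ (m : ℝ) by rw [Real.rpow_natCast]; ring,
      Real.mul_rpow (by positivity) (by positivity), ← Real.rpow_mul zero_le_two, mul_neg]
  have hgrowth : 1 ≤ (2 : ℝ) ^ (-((m : ℝ) * γ)) * 2 ^ ((m : ℝ) * ∑ j, 1 / β j) := by
    rw [← Real.rpow_add two_pos]
    exact Real.one_le_rpow one_le_two (by nlinarith [m.cast_nonneg (α := ℝ)])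
  calc ENNReal.ofReal ((2 * n) ^ (-γ) * P)
      ≤ ENNReal.ofReal ((n * 2 ^ (m + 1)) ^ (-γ)) * volume (dyadicBox β m) := by
        rw [volume_dyadicBox hβ, ← ENNReal.ofReal_mul (by positivity), hsplit]
        refine ENNReal.ofReal_le_ofReal ?_
        calc (2 * n) ^ (-γ) * P = (2 * n) ^ (-γ) * P * 1 := (mul_one _).symm
          _ ≤ (2 * n) ^ (-γ) * P * (2 ^ (-((m : ℝ) * γ)) * 2 ^ ((m : ℝ) * ∑ j, 1 / β j)) := by
              gcongr
          _ = _ := by ring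
    _ = ∫⁻ x in dyadicBox β m, ENNReal.ofReal ((n * 2 ^ (m + 1)) ^ (-γ)) :=
        (setLIntegral_const _ _).symm
    _ ≤ _ := setLIntegral_mono (by fun_prop) hbound

lemma setLIntegral_iUnion_dyadicBox_succ_eq_top (hβ : ∀ j, 0 < β j) {γ : ℝ} (hγ : 0 ≤ γ)
    (h : γ ≤ ∑ j, 1 / β j) :
    ∫⁻ x in ⋃ m, dyadicBox β (m + 1), ENNReal.ofReal ((∑ j, |x j| ^ β j) ^ (-γ)) = ⊤ :=
  setLIntegral_iUnion_eq_top (fun m => measurableSet_dyadicBox β (m + 1))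
    ((pairwise_disjoint_dyadicBox hβ).comp_of_injective (add_left_injective 1))
    (ENNReal.ofReal_pos.2 (mul_pos (by positivity) (prod_two_rpow_one_div_sub_one_pos hβ))).ne'
    fun m => le_setLIntegral_dyadicBox hβ hγ h (m + 1)

end

theorem stmt4 (N : ℕ) (hN : 1 ≤ N) (γ : ℝ) (hγ : 0 < γ) (β : Fin N → ℝ)
    (hβ : ∀ j, 0 < β j) (h : γ ≤ ∑ j, 1 / β j) :
    ∫⁻ l in {l : EuclideanSpace ℝ (Fin N) | 1 < ‖l‖},
      ENNReal.ofReal ((∑ j, |l j| ^ β j) ^ (-γ)) = ⊤ := by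
  have j : Fin N := ⟨0, hN⟩
  rw [← (PiLp.volume_preserving_toLp (Fin N)).setLIntegral_comp_preimage_emb
    (MeasurableEquiv.toLp 2 (Fin N → ℝ)).measurableEmbedding]
  have : Nonempty (Fin N) := ⟨j⟩
  refine top_le_iff.1 ((setLIntegral_iUnion_dyadicBox_succ_eq_top hβ hγ.le h).ge.trans
    (lintegral_mono_set (iUnion_subset fun m x hx => ?_)))
  calc (1 : ℝ) < x j := (one_lt_dyadicCorner hβ m.succ_pos j).trans_le (hx j (mem_univ j)).1
    _ ≤ ‖x j‖ := Real.le_norm_self _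
    _ ≤ ‖WithLp.toLp 2 x‖ := PiLp.norm_apply_le (WithLp.toLp 2 x) j
end

section
/- Let v(h) = 2∫_{R^N} (1 − cos⟨h, λ⟩) dF(λ) where F is a symmetric measure with ∫ |λ|²/(1+|λ|²) dF(λ) < ∞, and suppose ∫_{R^N} λ_j² dF(λ) < ∞ for a fixed j. Then the limit lim_{h,k→0} (v(h e_j) + v(k e_j) − v((h−k) e_j))/(h k) exists and equals 2 ∫_{R^N} λ_j² dF(λ). -/
open MeasureTheory Filter Topology Real

/-!
Along `e_j` the increment `v (h e_j) + v (k e_j) - v ((h - k) e_j)` is twice the integral of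
`(1 - cos hλ) + (1 - cos kλ) - (1 - cos (h - k)λ) = (1 - cos hλ)(1 - cos kλ) + sin hλ sin kλ`
with `λ = l j`. Divided by `h k` this tends to `λ²` and, since `1 - cos x ≤ |x|` and
`|sin x| ≤ |x|`, is bounded by `2 λ²`; dominated convergence concludes.
-/

lemma one_sub_cos_le_abs (x : ℝ) : 1 - cos x ≤ |x| := by
  rcases le_total |x| 2 with h | h
  · nlinarith [one_sub_sq_div_two_le_cos (x := x), abs_nonneg x, sq_abs x]
  · linarith [neg_one_le_cos x]

lemma one_sub_cos_add_one_sub_cos_sub_one_sub_cos_sub (a b : ℝ) :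
    (1 - cos a) + (1 - cos b) - (1 - cos (a - b)) = (1 - cos a) * (1 - cos b) + sin a * sin b := by
  rw [cos_sub]; ring

lemma abs_cos_second_difference_div_le (s t c : ℝ) :
    |((1 - cos (s * c)) + (1 - cos (t * c)) - (1 - cos ((s - t) * c))) / (s * t)| ≤ 2 * c ^ 2 := by
  rw [sub_mul, one_sub_cos_add_one_sub_cos_sub_one_sub_cos_sub, abs_div]
  refine div_le_of_le_mul₀ (abs_nonneg _) (by positivity) ?_
  have hs := one_sub_cos_le_abs (s * c)
  have ht := one_sub_cos_le_abs (t * c)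
  have hs' := cos_le_one (s * c)
  have ht' := cos_le_one (t * c)
  calc _ ≤ |(1 - cos (s * c)) * (1 - cos (t * c))| + |sin (s * c) * sin (t * c)| := abs_add_le _ _
    _ ≤ |s * c| * |t * c| + |s * c| * |t * c| := by
      rw [abs_mul, abs_mul, abs_of_nonneg (sub_nonneg.2 hs'), abs_of_nonneg (sub_nonneg.2 ht')]
      gcongr ?_ + ?_
      · exact mul_le_mul hs ht (sub_nonneg.2 ht') (abs_nonneg _)
      · exact mul_le_mul abs_sin_le_abs abs_sin_le_abs (abs_nonneg _) (abs_nonneg _)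
    _ = 2 * c ^ 2 * |s * t| := by
      simp only [abs_mul, ← sq_abs c]; ring

lemma tendsto_div_of_hasDerivAt_zero {f : ℝ → ℝ} {f' : ℝ} (hf : HasDerivAt f f' 0)
    (h0 : f 0 = 0) : Tendsto (fun t => f t / t) (𝓝[≠] 0) (𝓝 f') := by
  simpa [h0, div_eq_inv_mul] using hf.tendsto_slope_zero

lemma tendsto_cos_second_difference_div (c : ℝ) :
    Tendsto (fun p : ℝ × ℝ =>
        ((1 - cos (p.1 * c)) + (1 - cos (p.2 * c)) - (1 - cos ((p.1 - p.2) * c))) / (p.1 * p.2))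
      (𝓝[≠] 0 ×ˢ 𝓝[≠] 0) (𝓝 (c ^ 2)) := by
  have hsin : Tendsto (fun t => sin (t * c) / t) (𝓝[≠] 0) (𝓝 c) := by
    refine tendsto_div_of_hasDerivAt_zero ?_ (by simp)
    simpa using ((hasDerivAt_id (0 : ℝ)).mul_const c).sin
  have hcos : Tendsto (fun t => (1 - cos (t * c)) / t) (𝓝[≠] 0) (𝓝 0) := by
    refine tendsto_div_of_hasDerivAt_zero ?_ (by simp)
    simpa using (((hasDerivAt_id (0 : ℝ)).mul_const c).cos).const_sub 1
  have hlim := ((hcos.comp tendsto_fst).mul (hcos.comp tendsto_snd)).add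
    ((hsin.comp tendsto_fst).mul (hsin.comp tendsto_snd))
  rw [zero_mul, zero_add, ← sq] at hlim
  refine hlim.congr' ?_
  filter_upwards [prod_mem_prod self_mem_nhdsWithin self_mem_nhdsWithin] with p ⟨hs, ht⟩
  rw [sub_mul, one_sub_cos_add_one_sub_cos_sub_one_sub_cos_sub]
  simp only [Function.comp_apply, div_mul_div_comm, ← add_div]

section Integral

variable {α : Type*} [MeasurableSpace α] {μ : Measure α} {g : α → ℝ}

lemma integrable_one_sub_cos_mul (hg : AEStronglyMeasurable g μ)
    (hg2 : Integrable (fun x => g x ^ 2) μ) (t : ℝ) :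
    Integrable (fun x => 1 - cos (t * g x)) μ := by
  refine (hg2.const_mul (t ^ 2 / 2)).mono'
    (continuous_const.sub (continuous_cos.comp (continuous_const.mul continuous_id))
      |>.comp_aestronglyMeasurable hg) (Eventually.of_forall fun x => ?_)
  rw [norm_of_nonneg (sub_nonneg.2 (cos_le_one _))]
  linarith [one_sub_sq_div_two_le_cos (x := t * g x), mul_pow t (g x) 2]

theorem tendsto_integral_cos_second_difference_div (hg : AEStronglyMeasurable g μ)
    (hg2 : Integrable (fun x => g x ^ 2) μ) :
    Tendsto (fun p : ℝ × ℝ =>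
        ((∫ x, (1 - cos (p.1 * g x)) ∂μ) + (∫ x, (1 - cos (p.2 * g x)) ∂μ)
          - ∫ x, (1 - cos ((p.1 - p.2) * g x)) ∂μ) / (p.1 * p.2))
      (𝓝[≠] 0 ×ˢ 𝓝[≠] 0) (𝓝 (∫ x, g x ^ 2 ∂μ)) := by
  have hint := integrable_one_sub_cos_mul hg hg2
  have hsum : ∀ s t, Integrable (fun x => (1 - cos (s * g x)) + (1 - cos (t * g x))) μ :=
    fun s t => (hint s).add (hint t)
  refine (tendsto_integral_filter_of_dominated_convergence (fun x => 2 * g x ^ 2)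
    (Eventually.of_forall fun p => ?_) (Eventually.of_forall fun p => ?_) (hg2.const_mul 2)
    (Eventually.of_forall fun x => tendsto_cos_second_difference_div (g x))).congr fun p => ?_
  · exact (((hsum _ _).sub (hint _)).div_const _).aestronglyMeasurable
  · exact Eventually.of_forall fun x => abs_cos_second_difference_div_le _ _ _
  · rw [integral_div, integral_sub (hsum _ _) (hint _), integral_add (hint _) (hint _)]

end Integral

theorem stmt12_general (N : ℕ) (F : Measure (Fin N → ℝ)) (j : Fin N)
    (hj : ∫⁻ l, ENNReal.ofReal ((l j) ^ 2) ∂F ≠ ⊤)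
    (v : (Fin N → ℝ) → ℝ)
    (hv : ∀ h, v h = 2 * ∫ l, (1 - Real.cos (∑ i, h i * l i)) ∂F) :
    Tendsto
      (fun p : ℝ × ℝ =>
        (v (p.1 • (Pi.single j 1 : Fin N → ℝ)) + v (p.2 • (Pi.single j 1 : Fin N → ℝ)) -
            v ((p.1 - p.2) • (Pi.single j 1 : Fin N → ℝ))) / (p.1 * p.2))
      ((𝓝[≠] (0:ℝ)) ×ˢ (𝓝[≠] (0:ℝ)))
      (𝓝 (2 * ∫ l, (l j) ^ 2 ∂F)) := by
  have hmeas : AEStronglyMeasurable (fun l : Fin N → ℝ => l j) F :=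
    (continuous_apply j).aestronglyMeasurable
  have hsq : Integrable (fun l : Fin N → ℝ => l j ^ 2) F :=
    ⟨hmeas.pow 2, (hasFiniteIntegral_iff_ofReal (.of_forall fun l => sq_nonneg _)).2 hj.lt_top⟩
  have hv_single : ∀ t : ℝ, v (t • Pi.single j 1) = 2 * ∫ l, (1 - cos (t * l j)) ∂F := by
    simp [hv, Pi.single_apply]
  refine ((tendsto_integral_cos_second_difference_div hmeas hsq).const_mul 2).congr fun p => ?_
  simp only [hv_single]
  ring

theorem stmt12 (N : ℕ) (F : Measure (Fin N → ℝ)) (j : Fin N)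
    (hYaglom : ∫⁻ l, ENNReal.ofReal
        ((∑ i, (l i) ^ 2) / (1 + ∑ i, (l i) ^ 2)) ∂F ≠ ⊤)
    (hsymm : F.map (fun l => -l) = F)
    (hj : ∫⁻ l, ENNReal.ofReal ((l j) ^ 2) ∂F ≠ ⊤)
    (v : (Fin N → ℝ) → ℝ)
    (hv : ∀ h, v h = 2 * ∫ l, (1 - Real.cos (∑ i, h i * l i)) ∂F) :
    Tendsto
      (fun p : ℝ × ℝ =>
        (v (p.1 • (Pi.single j 1 : Fin N → ℝ)) + v (p.2 • (Pi.single j 1 : Fin N → ℝ)) -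
            v ((p.1 - p.2) • (Pi.single j 1 : Fin N → ℝ))) / (p.1 * p.2))
      ((𝓝[≠] (0:ℝ)) ×ˢ (𝓝[≠] (0:ℝ)))
      (𝓝 (2 * ∫ l, (l j) ^ 2 ∂F)) :=
  stmt12_general N F j hj v hv
end

section
/- Let γ > 0, β_j > 0 with γ > ∑_i 1/β_i, and H_j = (β_j/2)(γ − ∑_i 1/β_i). Then for each fixed j, the inequality β_j(γ − ∑_{i=1}^N 1/β_i) > 2 holds if and only if H_j > 1, and in that case ∫_{|λ|>1} λ_j² (∑_{i=1}^N |λ_i|^{β_i})^{-γ} dλ < ∞. -/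
/-!
Write `γ = ∑ gᵢ` with `gᵢ > 0`, `βᵢ gᵢ > 1` for all `i` and `βⱼ gⱼ > 3`; such a splitting exists
exactly when `βⱼ (γ - ∑ 1/βᵢ) > 2`. Off the unit ball `A = ∑ |λᵢ|^βᵢ` is bounded below by some
`c > 0`, hence `A^(-γ) = ∏ A^(-gᵢ) ≤ 2^γ ∏ (c + |λᵢ|^βᵢ)^(-gᵢ)`. So the integrand is dominated by a
product of one-variable functions `|x|^kᵢ (c + |x|^βᵢ)^(-gᵢ)` (`kⱼ = 2`, otherwise `kᵢ = 0`), each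
integrable because it decays like `|x|^(kᵢ - βᵢ gᵢ)` with `kᵢ - βᵢ gᵢ < -1`.
-/

open MeasureTheory Real Set Finset

lemma integrable_abs_rpow_mul_add_abs_rpow_rpow_neg {k b c g : ℝ} (hk : 0 ≤ k) (hb : 0 < b)
    (hc : 0 < c) (h : k + 1 < b * g) :
    Integrable fun x : ℝ => |x| ^ k * (c + |x| ^ b) ^ (-g) := by
  set p := b * g - k
  have hp : 1 < p := by linarith
  have hg : 0 < g := by nlinarith
  have hcont : Continuous fun x : ℝ => |x| ^ k * (c + |x| ^ b) ^ (-g) :=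
    (continuous_abs.rpow_const fun _ => .inr hk).mul <|
      (continuous_const.add (continuous_abs.rpow_const fun _ => .inr hb.le)).rpow_const
        fun x => .inl (add_pos_of_pos_of_nonneg hc (by positivity)).ne'
  have hdom : Integrable fun x : ℝ => 2 ^ p * (1 + |x|) ^ (-p) := by
    simpa using (integrable_one_add_norm (E := ℝ) (μ := volume) (r := p) (by simpa)).const_mul _
  rw [← integrableOn_univ, ← union_compl_self (Icc (-1 : ℝ) 1), integrableOn_union]
  refine ⟨hcont.integrableOn_Icc, hdom.integrableOn.mono' hcont.aestronglyMeasurable.restrict <|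
    ae_restrict_of_forall_mem measurableSet_Icc.compl fun x hx => ?_⟩
  have hx : 1 < |x| := by
    rw [mem_compl_iff, Set.mem_Icc, ← abs_le, not_le] at hx
    exact hx
  have hx0 : 0 < |x| := one_pos.trans hx
  calc ‖|x| ^ k * (c + |x| ^ b) ^ (-g)‖ = |x| ^ k * (c + |x| ^ b) ^ (-g) :=
        norm_of_nonneg (by positivity)
    _ ≤ |x| ^ k * (|x| ^ b) ^ (-g) := by
        refine mul_le_mul_of_nonneg_left ?_ (by positivity)
        exact rpow_le_rpow_of_nonpos (by positivity) (by linarith) (by linarith)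
    _ = |x| ^ (-p) := by
        rw [← rpow_mul hx0.le, ← rpow_add hx0, neg_sub, sub_eq_add_neg, mul_neg]
    _ = 2 ^ p * (2 * |x|) ^ (-p) := by
        rw [mul_rpow zero_le_two hx0.le, ← mul_assoc, ← rpow_add two_pos, add_neg_cancel,
          rpow_zero, one_mul]
    _ ≤ 2 ^ p * (1 + |x|) ^ (-p) := by
        refine mul_le_mul_of_nonneg_left ?_ (by positivity)
        exact rpow_le_rpow_of_nonpos (by positivity) (by linarith) (by linarith)

lemma exists_pos_sum_eq_and_lt_mul {ι : Type*} [Fintype ι] [Nonempty ι] {β k : ι → ℝ} {γ : ℝ}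
    (hβ : ∀ i, 0 < β i) (hk : ∀ i, 0 ≤ k i) (h : ∑ i, (k i + 1) / β i < γ) :
    ∃ g : ι → ℝ, (∀ i, 0 < g i) ∧ ∑ i, g i = γ ∧ ∀ i, k i + 1 < β i * g i := by
  set δ := (γ - ∑ i, (k i + 1) / β i) / Fintype.card ι
  have hδ : 0 < δ := div_pos (sub_pos.2 h) (by exact_mod_cast Fintype.card_pos)
  refine ⟨fun i => (k i + 1) / β i + δ, fun i => ?_, ?_, fun i => ?_⟩
  · have := hβ i; have := hk i; positivity
  · rw [sum_add_distrib, sum_const, card_univ, nsmul_eq_mul, mul_div_cancel₀ _ (by simp)]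
    ring
  · rw [mul_add, mul_div_cancel₀ _ (hβ i).ne']
    linarith [mul_pos (hβ i) hδ]

lemma EuclideanSpace.exists_inv_card_lt_abs_apply {ι : Type*} [Fintype ι]
    {x : EuclideanSpace ℝ ι} (hx : 1 < ‖x‖) : ∃ i, (Fintype.card ι : ℝ)⁻¹ < |x i| := by
  have hl2_le_l1 : ‖x‖ ^ 2 ≤ (∑ i, |x i|) ^ 2 := by
    simpa [EuclideanSpace.real_norm_sq_eq] using
      sum_sq_le_sq_sum_of_nonneg (s := univ) (f := fun i => |x i|) fun i _ => abs_nonneg _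
  have hl1 : 1 < ∑ i, |x i| := by
    refine lt_of_pow_lt_pow_left₀ 2 (sum_nonneg fun i _ => abs_nonneg _) ?_
    rw [one_pow]
    exact (one_lt_pow₀ hx two_ne_zero).trans_le hl2_le_l1
  have : ∑ _i : ι, (Fintype.card ι : ℝ)⁻¹ < ∑ i, |x i| := by
    rw [sum_const, card_univ, nsmul_eq_mul]
    exact mul_inv_le_one.trans_lt hl1
  obtain ⟨i, -, hi⟩ := exists_lt_of_sum_lt this
  exact ⟨i, hi⟩

lemma exists_pos_le_sum_abs_rpow_of_one_lt_norm {ι : Type*} [Fintype ι] [Nonempty ι]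
    {β : ι → ℝ} (hβ : ∀ i, 0 ≤ β i) :
    ∃ c > 0, ∀ x : EuclideanSpace ℝ ι, 1 < ‖x‖ → c ≤ ∑ i, |x i| ^ β i := by
  refine ⟨univ.inf' univ_nonempty fun i => (Fintype.card ι : ℝ)⁻¹ ^ β i,
    (lt_inf'_iff _).2 fun i _ => by positivity, fun x hx => ?_⟩
  obtain ⟨m, hm⟩ := EuclideanSpace.exists_inv_card_lt_abs_apply hx
  calc univ.inf' univ_nonempty (fun i => (Fintype.card ι : ℝ)⁻¹ ^ β i)
      ≤ (Fintype.card ι : ℝ)⁻¹ ^ β m := inf'_le _ (mem_univ m)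
    _ ≤ |x m| ^ β m := rpow_le_rpow (by positivity) hm.le (hβ m)
    _ ≤ ∑ i, |x i| ^ β i :=
        single_le_sum (f := fun i => |x i| ^ β i) (fun i _ => by positivity) (mem_univ m)

lemma rpow_neg_sum_le_two_rpow_mul_prod {ι : Type*} [Fintype ι] {a g : ι → ℝ} {c : ℝ}
    (ha : ∀ i, 0 ≤ a i) (hg : ∀ i, 0 ≤ g i) (hc : 0 < c) (hca : c ≤ ∑ i, a i) :
    (∑ i, a i) ^ (-∑ i, g i) ≤ 2 ^ (∑ i, g i) * ∏ i, (c + a i) ^ (-g i) := by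
  have hA : 0 < ∑ i, a i := hc.trans_le hca
  calc (∑ i, a i) ^ (-∑ i, g i) = ∏ i, (∑ i, a i) ^ (-g i) := by
        rw [← sum_neg_distrib, rpow_sum_of_pos hA]
    _ ≤ ∏ i, ((c + a i) / 2) ^ (-g i) := by
        refine prod_le_prod (fun i _ => by positivity) fun i _ => ?_
        have := single_le_sum (fun i _ => ha i) (mem_univ i)
        exact rpow_le_rpow_of_nonpos (by linarith [ha i]) (by linarith) (by linarith [hg i])
    _ = 2 ^ (∑ i, g i) * ∏ i, (c + a i) ^ (-g i) := by
        rw [rpow_sum_of_pos two_pos, ← prod_mul_distrib]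
        refine prod_congr rfl fun i _ => ?_
        rw [div_rpow (by linarith [ha i]) zero_le_two, rpow_neg zero_le_two, div_inv_eq_mul,
          mul_comm]

lemma EuclideanSpace.integrable_prod {ι : Type*} [Fintype ι] {f : ι → ℝ → ℝ}
    (hf : ∀ i, Integrable (f i)) : Integrable fun x : EuclideanSpace ℝ ι => ∏ i, f i (x i) :=
  ((PiLp.volume_preserving_ofLp ι).integrable_comp_emb
    (MeasurableEquiv.toLp 2 (ι → ℝ)).symm.measurableEmbedding).2 (Integrable.fintype_prod hf)

theorem stmt14_general (N : ℕ) (γ : ℝ) (β : Fin N → ℝ)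
    (hβ : ∀ i, 0 < β i)
    (H : Fin N → ℝ) (hH : ∀ i, H i = (β i / 2) * (γ - ∑ i', 1 / β i'))
    (j : Fin N) :
    (2 < β j * (γ - ∑ i, 1 / β i) ↔ 1 < H j) ∧
    (2 < β j * (γ - ∑ i, 1 / β i) →
      ∫⁻ l in {l : EuclideanSpace ℝ (Fin N) | 1 < ‖l‖},
        ENNReal.ofReal ((l j) ^ 2 * (∑ i, |l i| ^ β i) ^ (-γ)) < ⊤) := by
  refine ⟨by rw [hH j]; constructor <;> intro h <;> linarith, fun hj => ?_⟩
  have : Nonempty (Fin N) := ⟨j⟩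
  set k : Fin N → ℝ := fun i => if i = j then 2 else 0
  have hk : ∀ i, 0 ≤ k i := fun i => by positivity
  have hkβ : ∑ i, (k i + 1) / β i < γ := by
    rw [sum_congr rfl fun i _ => add_div (k i) 1 (β i), sum_add_distrib,
      Fintype.sum_eq_single j fun i hi => by simp [k, hi]]
    simp only [k, if_pos rfl]
    linarith [(div_lt_iff₀' (hβ j)).2 hj]
  obtain ⟨g, hg, rfl, hgk⟩ := exists_pos_sum_eq_and_lt_mul hβ hk hkβ
  obtain ⟨c, hc, hcA⟩ := exists_pos_le_sum_abs_rpow_of_one_lt_norm fun i => (hβ i).le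
  have hdom := (EuclideanSpace.integrable_prod fun i =>
    integrable_abs_rpow_mul_add_abs_rpow_rpow_neg (hk i) (hβ i) hc (hgk i)).const_mul
      (2 ^ ∑ i, g i)
  refine IntegrableOn.setLIntegral_lt_top <| hdom.integrableOn.mono' (by fun_prop) <|
    ae_restrict_of_forall_mem (measurableSet_lt measurable_const measurable_norm) fun x hx => ?_
  have hsq : ∏ i, |x i| ^ k i = x j ^ 2 := by
    rw [Fintype.prod_eq_single j fun i hi => by simp [k, hi]]
    simp [k]
  rw [norm_of_nonneg (by positivity), ← hsq, prod_mul_distrib, mul_left_comm]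
  gcongr
  exact rpow_neg_sum_le_two_rpow_mul_prod (fun i => by positivity) (fun i => (hg i).le) hc
    (hcA x hx)

theorem stmt14 (N : ℕ) (hN : 1 ≤ N) (γ : ℝ) (hγ : 0 < γ) (β : Fin N → ℝ)
    (hβ : ∀ i, 0 < β i) (hsum : ∑ i, 1 / β i < γ)
    (H : Fin N → ℝ) (hH : ∀ i, H i = (β i / 2) * (γ - ∑ i', 1 / β i'))
    (j : Fin N) :
    (2 < β j * (γ - ∑ i, 1 / β i) ↔ 1 < H j) ∧
    (2 < β j * (γ - ∑ i, 1 / β i) →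
      ∫⁻ l in {l : EuclideanSpace ℝ (Fin N) | 1 < ‖l‖},
        ENNReal.ofReal ((l j) ^ 2 * (∑ i, |l i| ^ β i) ^ (-γ)) < ⊤) :=
  stmt14_general N γ β hβ H hH j
end

section
/- For every H > 1 there exist constants c > 0 such that for all h with 0 < |h| ≤ 1/2: ∫_{1}^{∞} (1 − cos(h x)) x² · x^{−(2H+1)} dx ≤ c (|h|^{2(H−1)} log(1/|h|) + |h|²). -/
/-!
Interpolating between `1 - cos u ≤ u² / 2` and `1 - cos u ≤ 2` gives `1 - cos u ≤ 2 |u|^α` for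
every `α ∈ [0, 2]`, hence `∫₁^∞ (1 - cos hx) x^{-(γ+1)} dx ≤ 2 |h|^α / (γ - α)` whenever `α < γ`.
If `γ = 2H - 2 > 2` take `α = 2`. Otherwise take `α = γ - δ` with `δ = min γ (1 / log (1/|h|))`:
then `|h|^{-δ} ≤ e` and `1 / δ ≲ log (1/|h|)`.
-/

open MeasureTheory Real Set

theorem Real.one_sub_cos_le_two_mul_abs_rpow {α : ℝ} (hα0 : 0 ≤ α) (hα2 : α ≤ 2) (u : ℝ) :
    1 - cos u ≤ 2 * |u| ^ α := by
  rcases le_or_gt |u| 1 with hu | hu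
  · calc 1 - cos u ≤ u ^ 2 / 2 := by linarith [one_sub_sq_div_two_le_cos (x := u)]
      _ = |u| ^ (2 : ℝ) / 2 := by rw [rpow_two, sq_abs]
      _ ≤ |u| ^ α / 2 := by
          gcongr ?_ / 2; exact rpow_le_rpow_of_exponent_ge' (abs_nonneg u) hu hα0 hα2
      _ ≤ 2 * |u| ^ α := by linarith [rpow_nonneg (abs_nonneg u) α]
  · linarith [neg_one_le_cos u, one_le_rpow hu.le hα0]

theorem integral_Ioi_one_sub_cos_mul_rpow_le {α s : ℝ} (h : ℝ) (hα0 : 0 ≤ α) (hα2 : α ≤ 2)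
    (hαs : α + s < -1) :
    ∫ x in Ioi 1, (1 - cos (h * x)) * x ^ s ≤ 2 * |h| ^ α / -(α + s + 1) := by
  have hle : ∀ x ∈ Ioi (1 : ℝ), (1 - cos (h * x)) * x ^ s ≤ 2 * |h| ^ α * x ^ (α + s) := by
    intro x (hx : 1 < x)
    have hx0 : 0 < x := one_pos.trans hx
    calc (1 - cos (h * x)) * x ^ s ≤ 2 * |h * x| ^ α * x ^ s := by
          gcongr; exact one_sub_cos_le_two_mul_abs_rpow hα0 hα2 _
      _ = 2 * |h| ^ α * x ^ (α + s) := by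
          rw [abs_mul, abs_of_pos hx0, mul_rpow (abs_nonneg h) hx0.le, rpow_add hx0]; ring
  calc ∫ x in Ioi 1, (1 - cos (h * x)) * x ^ s
      ≤ ∫ x in Ioi 1, 2 * |h| ^ α * x ^ (α + s) := by
        refine integral_mono_of_nonneg ?_ ((integrableOn_Ioi_rpow_of_lt hαs one_pos).const_mul _)
          ((ae_restrict_mem measurableSet_Ioi).mono hle)
        filter_upwards [ae_restrict_mem measurableSet_Ioi] with x (hx : 1 < x)
        exact mul_nonneg (by linarith [cos_le_one (h * x)]) (rpow_nonneg (one_pos.trans hx).le s)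
    _ = 2 * |h| ^ α / -(α + s + 1) := by
        rw [integral_const_mul, integral_Ioi_rpow_of_lt hαs one_pos, one_rpow, div_neg]; ring

theorem rpow_sub_le_exp_one_mul {t δ : ℝ} (γ : ℝ) (ht : 0 < t) (hδ : δ * log (1 / t) ≤ 1) :
    t ^ (γ - δ) ≤ exp 1 * t ^ γ := by
  rw [rpow_sub ht, rpow_def_of_pos ht δ, div_eq_mul_inv, ← exp_neg, mul_comm]
  gcongr
  rw [one_div, log_inv] at hδ
  linarith

theorem exists_integral_Ioi_one_sub_cos_mul_rpow_le_log {γ : ℝ} (hγ0 : 0 < γ) (hγ2 : γ ≤ 2) :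
    ∃ c > 0, ∀ h : ℝ, 0 < |h| → |h| ≤ 1 / 2 →
      ∫ x in Ioi 1, (1 - cos (h * x)) * x ^ (-(γ + 1)) ≤ c * (|h| ^ γ * log (1 / |h|)) := by
  have hlog2 : 0 < log 2 := log_pos one_lt_two
  refine ⟨2 * exp 1 * (1 / (γ * log 2) + 1), by positivity, fun h hh hh2 => ?_⟩
  set L := log (1 / |h|)
  have hL2 : log 2 ≤ L := log_le_log two_pos (by rw [le_div_iff₀ hh]; linarith)
  have hL : 0 < L := hlog2.trans_le hL2
  set δ := min γ (1 / L)
  have hδ : 0 < δ := lt_min hγ0 (by positivity)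
  have hδL : δ * L ≤ 1 := (le_div_iff₀ hL).mp (min_le_right _ _)
  have hδinv : 1 / δ ≤ (1 / (γ * log 2) + 1) * L := by
    have h1γ : 1 / γ ≤ 1 / (γ * log 2) * L :=
      calc 1 / γ = 1 / (γ * log 2) * log 2 := by field_simp
        _ ≤ 1 / (γ * log 2) * L := by gcongr
    obtain hmin | hmin : δ = γ ∨ δ = 1 / L := min_choice _ _ <;> rw [hmin] <;>
      nlinarith [one_div_pos.mpr hγ0, one_div_one_div L]
  calc ∫ x in Ioi 1, (1 - cos (h * x)) * x ^ (-(γ + 1))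
      ≤ 2 * |h| ^ (γ - δ) / -(γ - δ + -(γ + 1) + 1) :=
        integral_Ioi_one_sub_cos_mul_rpow_le h (by linarith [min_le_left γ (1 / L)])
          (by linarith) (by linarith)
    _ = 2 * |h| ^ (γ - δ) * (1 / δ) := by ring_nf
    _ ≤ 2 * (exp 1 * |h| ^ γ) * ((1 / (γ * log 2) + 1) * L) := by
        gcongr
        exact rpow_sub_le_exp_one_mul γ hh hδL
    _ = 2 * exp 1 * (1 / (γ * log 2) + 1) * (|h| ^ γ * L) := by ring

theorem stmt19 (H : ℝ) (hH : 1 < H) :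
    ∃ c : ℝ, 0 < c ∧ ∀ h : ℝ, 0 < |h| → |h| ≤ 1 / 2 →
      ∫ x in Set.Ioi (1:ℝ), (1 - Real.cos (h * x)) * x ^ 2 * x ^ (-(2 * H + 1)) ≤
        c * (|h| ^ (2 * (H - 1)) * Real.log (1 / |h|) + |h| ^ 2) := by
  have hintegrand : ∀ h : ℝ, ∫ x in Ioi (1:ℝ), (1 - cos (h * x)) * x ^ 2 * x ^ (-(2 * H + 1)) =
      ∫ x in Ioi 1, (1 - cos (h * x)) * x ^ (-(2 * (H - 1) + 1)) := fun h ↦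
    setIntegral_congr_fun measurableSet_Ioi fun x (hx : 1 < x) ↦ by
      rw [mul_assoc, ← rpow_two, ← rpow_add (one_pos.trans hx)]; ring_nf
  rcases le_or_gt H 2 with hH2 | hH2
  · obtain ⟨c, hc, hbound⟩ :=
      exists_integral_Ioi_one_sub_cos_mul_rpow_le_log (γ := 2 * (H - 1)) (by linarith) (by linarith)
    refine ⟨c, hc, fun h hh hh2 => ?_⟩
    rw [hintegrand]
    exact (hbound h hh hh2).trans (by gcongr; exact le_add_of_nonneg_right (sq_nonneg _))
  · have hc : 0 < 2 / (2 * H - 4) := div_pos two_pos (by linarith)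
    refine ⟨2 / (2 * H - 4), hc, fun h hh hh2 => ?_⟩
    have hlog : 0 ≤ log (1 / |h|) := log_nonneg (by rw [le_div_iff₀ hh]; linarith)
    rw [hintegrand]
    calc ∫ x in Ioi 1, (1 - cos (h * x)) * x ^ (-(2 * (H - 1) + 1))
        ≤ 2 * |h| ^ (2 : ℝ) / -(2 + -(2 * (H - 1) + 1) + 1) :=
          integral_Ioi_one_sub_cos_mul_rpow_le h (zero_le_two (α := ℝ)) le_rfl (by linarith)
      _ = 2 / (2 * H - 4) * |h| ^ 2 := by rw [rpow_two]; ring_nf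
      _ ≤ 2 / (2 * H - 4) * (|h| ^ (2 * (H - 1)) * log (1 / |h|) + |h| ^ 2) :=
          mul_le_mul_of_nonneg_left (le_add_of_nonneg_left (mul_nonneg (by positivity) hlog)) hc.le
end
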